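/- Let M be a positive integer and for each j = 1, …, M let (R_j(n))_{n≥1} be a reversible and positive ILRS of order d_j ≥ 1. Then for every integer q ≥ 2 there exists an integer L with 1 ≤ L ≤ q^{d_1 ⋯ d_M} such that (R_1∘⋯∘R_M)(n) ≡ (R_1∘⋯∘R_M)(n+L) (mod q) for every integer n ≥ 1. -/

import Mathlib

open Filter Polynomial

/-- `R` is an inhomogeneous linear recurrence sequence (ILRS) of order `d`:
there are integers `a 0, …, a (d-1), b` with `a 0 ≠ 0` such that
`R (n+d) = a (d-1) * R (n+d-1) + ⋯ + a 0 * R n + b` for all `n ≥ 1`. -/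
def IsILRS (R : ℕ → ℤ) (d : ℕ) : Prop :=
  1 ≤ d ∧ ∃ (a : ℕ → ℤ) (b : ℤ), a 0 ≠ 0 ∧
    ∀ n : ℕ, 1 ≤ n → R (n + d) = (∑ i ∈ Finset.range d, a i * R (n + i)) + b

/-- `R` is a reversible ILRS of order `d`, i.e. one may take `a 0 = ±1`. -/
def IsRevILRS (R : ℕ → ℤ) (d : ℕ) : Prop :=
  1 ≤ d ∧ ∃ (a : ℕ → ℤ) (b : ℤ), (a 0 = 1 ∨ a 0 = -1) ∧
    ∀ n : ℕ, 1 ≤ n → R (n + d) = (∑ i ∈ Finset.range d, a i * R (n + i)) + b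

/-- The composition `(R 0 ∘ R 1 ∘ ⋯ ∘ R (M-1)) (n)` (the identity when `M = 0`),
using `Int.toNat` to feed integer values back in as arguments. -/
def iterComp : (M : ℕ) → (Fin M → ℕ → ℤ) → ℕ → ℤ
  | 0, _, n => (n : ℤ)
  | M + 1, R, n => R 0 (iterComp M (fun j => R j.succ) n).toNat

/-- A Pisot number: a real algebraic integer `α > 1` all of whose conjugates
other than `α` itself lie in the open unit disk. -/
def IsPisot (α : ℝ) : Prop :=
  1 < α ∧ IsIntegral ℤ α ∧
    ∀ z : ℂ, Polynomial.aeval z (minpoly ℤ α) = 0 → z ≠ (α : ℂ) → ‖z‖ < 1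

/-- A Salem number: a real reciprocal algebraic integer `α > 1` of degree at least 4
whose conjugates other than `α` and `1/α` all have modulus 1. -/
def IsSalem (α : ℝ) : Prop :=
  1 < α ∧ IsIntegral ℤ α ∧ 4 ≤ (minpoly ℤ α).natDegree ∧
    Polynomial.aeval ((α : ℂ)⁻¹) (minpoly ℤ α) = 0 ∧
    ∀ z : ℂ, Polynomial.aeval z (minpoly ℤ α) = 0 → z ≠ (α : ℂ) → z ≠ (α : ℂ)⁻¹ →
      ‖z‖ = 1

/-- An integer is composite if it is greater than 1 and not prime. -/
def IsCompositeInt (N : ℤ) : Prop := 1 < N ∧ ¬ Prime N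

lemma period_of_rev (R : ℕ → ℤ) (d : ℕ) (h : IsRevILRS R d) (q : ℕ) (hq : 1 ≤ q) :
    ∃ L : ℕ, 1 ≤ L ∧ L ≤ q ^ d ∧ ∀ n : ℕ, 1 ≤ n → ((R (n + L) : ZMod q)) = R n := by
  obtain ⟨hd, a, b, ha0, hrec⟩ := h
  obtain ⟨e, rfl⟩ : ∃ e, d = e + 1 := ⟨d - 1, by omega⟩
  haveI : NeZero q := ⟨by omega⟩
  set S := Fin (e + 1) → ZMod q with hS
  let s : ℕ → S := fun n i => (R (n + i) : ZMod q)
  let F : S → S := fun v j =>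
    if hj : (j : ℕ) + 1 < e + 1 then v ⟨j + 1, hj⟩
    else (∑ i : Fin (e + 1), (a i : ZMod q) * v i) + (b : ZMod q)
  have hstep : ∀ n, 1 ≤ n → s (n + 1) = F (s n) := by
    intro n hn
    funext j
    show ((R (n + 1 + j) : ZMod q)) = F (s n) j
    by_cases hj : (j : ℕ) + 1 < e + 1
    · simp only [F, dif_pos hj]
      show ((R (n + 1 + j) : ZMod q)) = R (n + (j + 1))
      have hnj : n + 1 + (j : ℕ) = n + ((j : ℕ) + 1) := by omega
      rw [hnj]
    · simp only [F, dif_neg hj]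
      have : n + 1 + (j : ℕ) = n + (e + 1) := by have := j.isLt; omega
      rw [this, hrec n hn]
      push_cast
      rw [← Fin.sum_univ_eq_sum_range (fun i => (a i : ZMod q) * (R (n + i) : ZMod q))]
  have hFinj : Function.Injective F := by
    intro v w hvw
    have htail : ∀ j : Fin e, v j.succ = w j.succ := by
      intro j
      have h1 := congrFun hvw j.castSucc
      have hj : ((j.castSucc : Fin (e+1)) : ℕ) + 1 < e + 1 := by
        simpa using j.isLt
      simp only [F, dif_pos hj] at h1; exact h1
    have hhead : v 0 = w 0 := by
      have h1 := congrFun hvw (Fin.last e)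
      have hj : ¬ ((Fin.last e : Fin (e+1)) : ℕ) + 1 < e + 1 := by simp
      simp only [F, dif_neg hj, add_left_inj] at h1
      rw [Fin.sum_univ_succ, Fin.sum_univ_succ] at h1
      have h2 : ∑ i : Fin e, (a (i.succ : Fin (e+1)) : ZMod q) * v i.succ
          = ∑ i : Fin e, (a (i.succ : Fin (e+1)) : ZMod q) * w i.succ :=
        Finset.sum_congr rfl fun i _ => by rw [htail i]
      rw [h2, add_left_inj] at h1
      have h0 : ((0 : Fin (e+1)) : ℕ) = 0 := rfl
      rcases ha0 with h | h
      · rw [h0, h] at h1; simpa using h1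
      · rw [h0, h] at h1; push_cast at h1
        simpa [neg_mul] using h1
    funext i
    refine Fin.cases hhead (fun j => htail j) i
  -- pigeonhole
  have hcard : Fintype.card S = q ^ (e + 1) := by
    simp [hS, ZMod.card]
  obtain ⟨x, y, hxy, hfxy⟩ :=
    Fintype.exists_ne_map_eq_of_card_lt (fun k : Fin (q ^ (e+1) + 1) => s (k + 1))
      (by rw [hcard]; simp)
  wlog hlt : (x : ℕ) < (y : ℕ) generalizing x y
  · have hne : (x : ℕ) ≠ (y : ℕ) := fun h => hxy (Fin.ext h)
    exact this y x hxy.symm hfxy.symm (by omega)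
  · refine ⟨(y : ℕ) - x, by omega, by have := y.isLt; omega, ?_⟩
    have back : ∀ k, k ≤ (x : ℕ) → s ((x : ℕ) + 1 - k) = s ((y : ℕ) + 1 - k) := by
      intro k
      induction k with
      | zero => intro _; simpa using hfxy
      | succ k ih =>
        intro hk
        have h1 := ih (by omega)
        apply hFinj
        have ex : (x:ℕ) - k + 1 = (x:ℕ) + 1 - k := by omega
        have ey : (y:ℕ) - k + 1 = (y:ℕ) + 1 - k := by omega
        have ex2 : (x:ℕ) + 1 - (k+1) = (x:ℕ) - k := by omega
        have ey2 : (y:ℕ) + 1 - (k+1) = (y:ℕ) - k := by omega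
        rw [ex2, ey2, ← hstep _ (by omega : 1 ≤ (x:ℕ) - k),
          ← hstep _ (by omega : 1 ≤ (y:ℕ) - k), ex, ey]
        exact h1
    have base : s 1 = s (1 + ((y:ℕ) - x)) := by
      have := back (x : ℕ) le_rfl
      have e1 : (x:ℕ) + 1 - x = 1 := by omega
      have e2 : (y:ℕ) + 1 - x = 1 + ((y:ℕ) - x) := by omega
      rwa [e1, e2] at this
    have fwd : ∀ n, 1 ≤ n → s (n + ((y:ℕ) - x)) = s n := by
      intro n hn
      induction n, hn using Nat.le_induction with
      | base => exact base.symm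
      | succ n hn ih =>
        have : n + 1 + ((y:ℕ) - x) = (n + ((y:ℕ) - x)) + 1 := by omega
        rw [this, hstep _ (by omega), hstep _ hn, ih]
    intro n hn
    have := congrFun (fwd n hn) 0
    simpa [s] using this

lemma iterComp_pos (M : ℕ) (R : Fin M → ℕ → ℤ)
    (hpos : ∀ j, ∀ n : ℕ, 1 ≤ n → 0 < R j n) :
    ∀ n : ℕ, 1 ≤ n → 1 ≤ iterComp M R n := by
  induction M with
  | zero => intro n hn; simp [iterComp]; exact_mod_cast hn
  | succ M ih =>
    intro n hn
    have h1 := ih (fun j => R j.succ) (fun j => hpos j.succ) n hn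
    have h2 : 1 ≤ (iterComp M (fun j => R j.succ) n).toNat := by omega
    exact hpos 0 _ h2

lemma cong_of_period (R : ℕ → ℤ) (q L : ℕ)
    (hper : ∀ n : ℕ, 1 ≤ n → ((R (n + L) : ZMod q)) = R n) :
    ∀ m m' : ℕ, 1 ≤ m → 1 ≤ m' → m ≡ m' [MOD L] → ((R m : ZMod q)) = R m' := by
  have key : ∀ k m : ℕ, 1 ≤ m → ((R (m + L * k) : ZMod q)) = R m := by
    intro k
    induction k with
    | zero => intro m _; simp
    | succ k ih =>
      intro m hm
      have : m + L * (k + 1) = (m + L * k) + L := by ring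
      rw [this, hper _ (by omega), ih m hm]
  intro m m' hm hm' hmm
  rcases le_total m m' with h | h
  · obtain ⟨k, hk⟩ := (Nat.modEq_iff_dvd' h).1 hmm
    have : m' = m + L * k := by omega
    rw [this, key k m hm]
  · obtain ⟨k, hk⟩ := (Nat.modEq_iff_dvd' h).1 hmm.symm
    have : m = m' + L * k := by omega
    rw [this, key k m' hm']

lemma key_lemma (M : ℕ) (d : Fin M → ℕ) (R : Fin M → ℕ → ℤ)
    (hrev : ∀ j, IsRevILRS (R j) (d j))
    (hpos : ∀ j, ∀ n : ℕ, 1 ≤ n → 0 < R j n)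
    (q : ℕ) (hq : 1 ≤ q) :
    ∃ L : ℕ, 1 ≤ L ∧ L ≤ q ^ (∏ j, d j) ∧
      ∀ m m' : ℕ, 1 ≤ m → 1 ≤ m' → m ≡ m' [MOD L] →
        ((iterComp M R m : ZMod q)) = iterComp M R m' := by
  induction M generalizing q with
  | zero =>
    refine ⟨q, hq, by simp, fun m m' _ _ h => ?_⟩
    show ((m : ℤ) : ZMod q) = ((m' : ℤ) : ZMod q)
    push_cast
    exact (ZMod.natCast_eq_natCast_iff _ _ _).2 h
  | succ M ih =>
    obtain ⟨L₁, hL₁1, hL₁le, hper⟩ := period_of_rev (R 0) (d 0) (hrev 0) q hq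
    have hcong := cong_of_period (R 0) q L₁ hper
    obtain ⟨L, hL1, hLle, hmain⟩ := ih (fun j => d j.succ) (fun j => R j.succ)
      (fun j => hrev j.succ) (fun j => hpos j.succ) L₁ hL₁1
    refine ⟨L, hL1, ?_, ?_⟩
    · calc L ≤ L₁ ^ (∏ j : Fin M, d j.succ) := hLle
        _ ≤ (q ^ d 0) ^ (∏ j : Fin M, d j.succ) := Nat.pow_le_pow_left hL₁le _
        _ = q ^ (∏ j : Fin (M + 1), d j) := by rw [← pow_mul, Fin.prod_univ_succ]
    · intro m m' hm hm' hmm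
      set T := iterComp M (fun j => R j.succ) with hT
      have h1 := hmain m m' hm hm' hmm
      have hTm : 1 ≤ T m := iterComp_pos M _ (fun j => hpos j.succ) m hm
      have hTm' : 1 ≤ T m' := iterComp_pos M _ (fun j => hpos j.succ) m' hm'
      have h2 : (T m).toNat ≡ (T m').toNat [MOD L₁] := by
        rw [← ZMod.natCast_eq_natCast_iff]
        have e1 : (((T m).toNat : ℕ) : ZMod L₁) = ((T m : ℤ) : ZMod L₁) := by
          rw [← Int.cast_natCast, Int.toNat_of_nonneg (by omega)]
        have e2 : (((T m').toNat : ℕ) : ZMod L₁) = ((T m' : ℤ) : ZMod L₁) := by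
          rw [← Int.cast_natCast, Int.toNat_of_nonneg (by omega)]
        rw [e1, e2]; exact h1
      show ((R 0 (T m).toNat : ZMod q)) = R 0 (T m').toNat
      exact hcong _ _ (by omega) (by omega) h2

theorem stmt8 (M : ℕ) (hM : 1 ≤ M) (d : Fin M → ℕ) (R : Fin M → ℕ → ℤ)
    (hrev : ∀ j, IsRevILRS (R j) (d j))
    (hpos : ∀ j, ∀ n : ℕ, 1 ≤ n → 0 < R j n)
    (q : ℕ) (hq : 2 ≤ q) :
    ∃ L : ℕ, 1 ≤ L ∧ L ≤ q ^ (∏ j, d j) ∧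
      ∀ n : ℕ, 1 ≤ n → iterComp M R n ≡ iterComp M R (n + L) [ZMOD q] := by
  obtain ⟨L, hL1, hLle, hmain⟩ := key_lemma M d R hrev hpos q (by omega)
  refine ⟨L, hL1, hLle, fun n hn => ?_⟩
  have h := hmain n (n + L) hn (by omega) (by simp [Nat.ModEq, Nat.add_mod])
  exact (ZMod.intCast_eq_intCast_iff _ _ _).1 h
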